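/- Let w ≤ 0. Then the map P^∞_{−∞} → P^∞_{−w} of stunted projective spectra is null-homotopic, and consequently there is a 2-adic equivalence P^{−w−1}_{−∞} ≃ S^{−1} ∨ Σ^{−1}P^∞_{−w}. -/

import Mathlib

open CategoryTheory Pretriangulated Limits

/-!
By Lin's theorem `P^∞_{−∞} ≃ S^{−1}`, and `P^∞_{−w}` is connective, so the map
`P^∞_{−∞} → P^∞_{−w}` is null. In a distinguished triangle `X → Y → Z → X⟦1⟧` whose
second map vanishes, the rotated triangle `Z⟦-1⟧ → X → Y → Z` has vanishing third map
and therefore splits: `X ≃ Y ∨ Z⟦-1⟧`.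
-/

namespace CategoryTheory.Pretriangulated

variable {C : Type*} [Category C] [Preadditive C] [HasZeroObject C] [HasShift C ℤ]
  [∀ n : ℤ, (shiftFunctor C n).Additive] [Pretriangulated C]

lemma nonempty_iso_coprod_of_distTriang_of_mor₂_eq_zero (T : Triangle C)
    (hT : T ∈ distTriang C) (h : T.mor₂ = 0) :
    Nonempty (T.obj₁ ≅ T.obj₂ ⨿ T.obj₃⟦(-1 : ℤ)⟧) := by
  have hmor₃ : T.invRotate.mor₃ = 0 := by
    rw [Triangle.invRotate_mor₃, h]
    exact zero_comp
  obtain ⟨e, -, -⟩ :=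
    exists_iso_binaryBiproduct_of_distTriang _ (inv_rot_of_distTriang _ hT) hmor₃
  exact ⟨e ≪≫ biprod.braiding _ _ ≪≫ biprod.isoCoprod _ _⟩

end CategoryTheory.Pretriangulated

lemma CategoryTheory.eq_zero_of_iso_of_forall_eq_zero {C : Type*} [Category C]
    [HasZeroMorphisms C] {X Y Z : C} (e : X ≅ Y) (h : ∀ f : X ⟶ Z, f = 0) (g : Y ⟶ Z) :
    g = 0 := by
  rw [← e.inv_hom_id_assoc g, h (e.hom ≫ g), comp_zero]

/- `Pneg b = P^b_{−∞}`, `Ptot = P^∞_{−∞}`, `Pinf w = P^∞_{−w}`, `Sm1 = S^{−1}` in the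
homotopy category `Sp` of 2-complete spectra; `hconn` is the vanishing of `π_{−1}` of the
connective spectrum `P^∞_{−w}`. -/
theorem statement_5 (Sp : Type*) [Category Sp] [Preadditive Sp]
    [HasZeroObject Sp] [HasShift Sp ℤ]
    [∀ n : ℤ, (shiftFunctor Sp n).Additive] [Pretriangulated Sp]
    [HasBinaryCoproducts Sp]
    (Pneg : ℤ → Sp) (Ptot : Sp) (Pinf : ℤ → Sp) (Sm1 : Sp)
    (ι : ∀ w : ℤ, Pneg (-w - 1) ⟶ Ptot) (p : ∀ w : ℤ, Ptot ⟶ Pinf w)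
    (δ : ∀ w : ℤ, Pinf w ⟶ (Pneg (-w - 1))⟦(1 : ℤ)⟧)
    (htriangle : ∀ w : ℤ, Triangle.mk (ι w) (p w) (δ w) ∈ distTriang Sp)
    (hLin : Nonempty (Sm1 ≅ Ptot))
    (hconn : ∀ w : ℤ, w ≤ 0 → ∀ f : Sm1 ⟶ Pinf w, f = 0) :
    ∀ w : ℤ, w ≤ 0 →
      p w = 0 ∧
      Nonempty (Pneg (-w - 1) ≅ (Sm1 ⨿ (Pinf w)⟦(-1 : ℤ)⟧)) := by
  intro w hw
  obtain ⟨eLin⟩ := hLin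
  have hp : p w = 0 := eq_zero_of_iso_of_forall_eq_zero eLin (hconn w hw) (p w)
  obtain ⟨eSplit⟩ := nonempty_iso_coprod_of_distTriang_of_mor₂_eq_zero _ (htriangle w) hp
  exact ⟨hp, ⟨eSplit ≪≫ coprod.mapIso eLin.symm (Iso.refl _)⟩⟩
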